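/- arXiv:2602.08033 — 2 statements merged into one kernel-verified Lean document; each statement's English description precedes it below -/
import Mathlib

section
/- The SCoRa MAP estimator is pairwise monotone for ratings: if two SCoRa datasets D and D' have the same comparisons and the same ratings except that one rating of entity a has value t in D and value t' in D' with t ≥ t', then θ_a*(D) − θ_0*(D) ≥ θ_a*(D') − θ_0*(D'). -/
open MeasureTheory RealInnerProductSpace

noncomputable section

/-- The cumulant generating function `Φ_μ(θ) = log ∫ exp(θ r) dμ(r)` of a measure `μ` on `ℝ`. -/
def cgfm (μ : Measure ℝ) (θ : ℝ) : ℝ := Real.log (∫ r, Real.exp (θ * r) ∂μ)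

/-- `μ` has finite exponential moments: `∫ exp(θ r) dμ(r) < ∞` for every `θ`. -/
def HasExpMoments (μ : Measure ℝ) : Prop :=
  ∀ θ : ℝ, Integrable (fun r => Real.exp (θ * r)) μ

/-- The SCoRa negative log-posterior `L(β, θ0 | D)` for a dataset consisting of a multiset `C`
of comparisons `(b, c, r)` and a multiset `Rt` of ratings `(a, t)`, with embedding columns
`x a ∈ ℝ^D`, comparison root law `f`, rating root law `g`, and prior variances `sb2 = σ_β²`,
`s02 = σ_0²`. -/
def scoraLoss {Dd A : ℕ} (x : Fin A → EuclideanSpace ℝ (Fin Dd))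
    (f g : Measure ℝ) (sb2 s02 : ℝ)
    (C : Multiset (Fin A × Fin A × ℝ)) (Rt : Multiset (Fin A × ℝ))
    (β : EuclideanSpace ℝ (Fin Dd)) (θ0 : ℝ) : ℝ :=
  ‖β‖ ^ 2 / (2 * sb2) + θ0 ^ 2 / (2 * s02)
    + (C.map (fun q =>
        cgfm f ⟪x q.1 - x q.2.1, β⟫ - q.2.2 * ⟪x q.1 - x q.2.1, β⟫)).sum
    + (Rt.map (fun q =>
        cgfm g (⟪x q.1, β⟫ - θ0) - q.2 * (⟪x q.1, β⟫ - θ0))).sum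

/-!
Write `L_t` for the loss whose distinguished rating of `a` has value `t`. Then
`L_t = L_{t'} - (t - t') * (⟪x a, β⟫ - θ0)`, and evaluating each loss at the other dataset's
minimizer gives `(t - t') * (u' - u) ≤ 0` for the two rating residuals `u, u'`, which is the claim
when `t > t'`. When `t = t'` the two datasets coincide, and the claim follows from uniqueness of
the minimizer: the Gaussian priors make the loss strongly convex, and the cumulant generating
functions are convex by Cauchy–Schwarz.
-/

open Real

lemma memLp_two_exp_half_mul {μ : Measure ℝ} {u : ℝ}
    (hu : Integrable (fun r => exp (u * r)) μ) :
    MemLp (fun r => exp (u / 2 * r)) (ENNReal.ofReal 2) μ := by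
  have hsq : (fun r => exp (u / 2 * r) ^ 2) = fun r => exp (u * r) := by
    funext r; rw [← exp_nat_mul]; ring_nf
  rw [ENNReal.ofReal_ofNat, memLp_two_iff_integrable_sq (by fun_prop), hsq]
  exact hu

/-- Cauchy–Schwarz applied to `exp (u r / 2) * exp (v r / 2)`. -/
lemma cgfm_midpoint_le (μ : Measure ℝ) [NeZero μ] {u v : ℝ}
    (hu : Integrable (fun r => exp (u * r)) μ) (hv : Integrable (fun r => exp (v * r)) μ) :
    cgfm μ ((u + v) / 2) ≤ (cgfm μ u + cgfm μ v) / 2 := by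
  have hpos : ∀ w, Integrable (fun r => exp (w * r)) μ → 0 < ∫ r, exp (w * r) ∂μ := fun w hw =>
    ProbabilityTheory.mgf_pos' (X := id) (NeZero.ne μ) hw
  have hsq : ∀ w : ℝ, (fun r => exp (w / 2 * r) ^ (2 : ℝ)) = fun r => exp (w * r) := by
    intro w; funext r; rw [← exp_mul]; ring_nf
  have hprod : (fun r => exp (u / 2 * r) * exp (v / 2 * r)) = fun r => exp ((u + v) / 2 * r) := by
    funext r; rw [← exp_add]; ring_nf
  have hCS := integral_mul_le_Lp_mul_Lq_of_nonneg Real.HolderConjugate.two_two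
    (Filter.Eventually.of_forall fun r => (exp_pos (u / 2 * r)).le)
    (Filter.Eventually.of_forall fun r => (exp_pos (v / 2 * r)).le)
    (memLp_two_exp_half_mul hu) (memLp_two_exp_half_mul hv)
  rw [hprod, hsq, hsq] at hCS
  have hmid : Integrable (fun r => exp ((u + v) / 2 * r)) μ := by
    have h := ProbabilityTheory.convex_integrableExpSet (X := id) hu hv
      (by norm_num : (0 : ℝ) ≤ 1 / 2) (by norm_num : (0 : ℝ) ≤ 1 / 2) (by norm_num)
    rwa [smul_eq_mul, smul_eq_mul, ← mul_add, one_div_mul_eq_div] at h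
  have hlog := log_le_log (hpos _ hmid) hCS
  rw [log_mul (by positivity [hpos u hu]) (by positivity [hpos v hv]),
    log_rpow (hpos u hu), log_rpow (hpos v hv)] at hlog
  unfold cgfm
  linarith

lemma Multiset.sum_map_le_half_add {ι : Type*} {s : Multiset ι} {G F₁ F₂ : ι → ℝ}
    (h : ∀ q ∈ s, G q ≤ (F₁ q + F₂ q) / 2) :
    (s.map G).sum ≤ ((s.map F₁).sum + (s.map F₂).sum) / 2 :=
  calc (s.map G).sum ≤ (s.map fun q => (F₁ q + F₂ q) / 2).sum :=
        Multiset.sum_map_le_sum_map _ _ h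
    _ = ((s.map F₁).sum + (s.map F₂).sum) / 2 := by
        rw [Multiset.sum_map_div, Multiset.sum_map_add]

lemma norm_half_smul_add_sq {E : Type*} [NormedAddCommGroup E] [InnerProductSpace ℝ E] (u v : E) :
    ‖(1 / 2 : ℝ) • (u + v)‖ ^ 2 = (‖u‖ ^ 2 + ‖v‖ ^ 2) / 2 - ‖u - v‖ ^ 2 / 4 := by
  have hpar := parallelogram_law_with_norm ℝ u v
  rw [norm_smul, mul_pow, Real.norm_of_nonneg (by norm_num)]
  linarith

section Scora

variable {Dd A : ℕ} (x : Fin A → EuclideanSpace ℝ (Fin Dd)) (f g : Measure ℝ) (sb2 s02 : ℝ)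
  (C : Multiset (Fin A × Fin A × ℝ))

/-- The quadratic gap comes from the prior terms alone (parallelogram law). -/
lemma scoraLoss_midpoint_add_le [NeZero f] [NeZero g] (hf : HasExpMoments f)
    (hg : HasExpMoments g) (Rt : Multiset (Fin A × ℝ)) (β β' : EuclideanSpace ℝ (Fin Dd))
    (θ0 θ0' : ℝ) :
    scoraLoss x f g sb2 s02 C Rt ((1 / 2 : ℝ) • (β + β')) ((θ0 + θ0') / 2)
        + (‖β - β'‖ ^ 2 / (8 * sb2) + (θ0 - θ0') ^ 2 / (8 * s02))
      ≤ (scoraLoss x f g sb2 s02 C Rt β θ0 + scoraLoss x f g sb2 s02 C Rt β' θ0') / 2 := by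
  have hinner : ∀ w : EuclideanSpace ℝ (Fin Dd),
      ⟪w, (1 / 2 : ℝ) • (β + β')⟫ = (⟪w, β⟫ + ⟪w, β'⟫) / 2 := by
    intro w
    rw [real_inner_smul_right, inner_add_right]
    ring
  have hprior : ‖(1 / 2 : ℝ) • (β + β')‖ ^ 2 / (2 * sb2) + ((θ0 + θ0') / 2) ^ 2 / (2 * s02)
      + (‖β - β'‖ ^ 2 / (8 * sb2) + (θ0 - θ0') ^ 2 / (8 * s02))
      = ((‖β‖ ^ 2 / (2 * sb2) + θ0 ^ 2 / (2 * s02))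
        + (‖β'‖ ^ 2 / (2 * sb2) + θ0' ^ 2 / (2 * s02))) / 2 := by
    rw [norm_half_smul_add_sq]
    ring
  have hcomparisons := Multiset.sum_map_le_half_add (s := C)
    (G := fun q => cgfm f ⟪x q.1 - x q.2.1, (1 / 2 : ℝ) • (β + β')⟫
      - q.2.2 * ⟪x q.1 - x q.2.1, (1 / 2 : ℝ) • (β + β')⟫)
    (F₁ := fun q => cgfm f ⟪x q.1 - x q.2.1, β⟫ - q.2.2 * ⟪x q.1 - x q.2.1, β⟫)
    (F₂ := fun q => cgfm f ⟪x q.1 - x q.2.1, β'⟫ - q.2.2 * ⟪x q.1 - x q.2.1, β'⟫)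
    fun q _ => by
      have := cgfm_midpoint_le f (hf ⟪x q.1 - x q.2.1, β⟫) (hf ⟪x q.1 - x q.2.1, β'⟫)
      simp only [hinner]
      linarith
  have hratings := Multiset.sum_map_le_half_add (s := Rt)
    (G := fun q => cgfm g (⟪x q.1, (1 / 2 : ℝ) • (β + β')⟫ - (θ0 + θ0') / 2)
      - q.2 * (⟪x q.1, (1 / 2 : ℝ) • (β + β')⟫ - (θ0 + θ0') / 2))
    (F₁ := fun q => cgfm g (⟪x q.1, β⟫ - θ0) - q.2 * (⟪x q.1, β⟫ - θ0))
    (F₂ := fun q => cgfm g (⟪x q.1, β'⟫ - θ0') - q.2 * (⟪x q.1, β'⟫ - θ0'))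
    fun q _ => by
      have := cgfm_midpoint_le g (hg (⟪x q.1, β⟫ - θ0)) (hg (⟪x q.1, β'⟫ - θ0'))
      simp only [hinner]
      rw [show (⟪x q.1, β⟫ + ⟪x q.1, β'⟫) / 2 - (θ0 + θ0') / 2
        = ((⟪x q.1, β⟫ - θ0) + (⟪x q.1, β'⟫ - θ0')) / 2 by ring]
      linarith
  unfold scoraLoss
  linarith

theorem scoraLoss_minimizer_unique [NeZero f] [NeZero g] (hf : HasExpMoments f)
    (hg : HasExpMoments g) (hsb : 0 < sb2) (hs0 : 0 < s02) (Rt : Multiset (Fin A × ℝ))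
    {β β' : EuclideanSpace ℝ (Fin Dd)} {θ0 θ0' : ℝ}
    (hmin : ∀ γ s, scoraLoss x f g sb2 s02 C Rt β θ0 ≤ scoraLoss x f g sb2 s02 C Rt γ s)
    (hmin' : ∀ γ s, scoraLoss x f g sb2 s02 C Rt β' θ0' ≤ scoraLoss x f g sb2 s02 C Rt γ s) :
    β = β' ∧ θ0 = θ0' := by
  have hgap : ‖β - β'‖ ^ 2 / (8 * sb2) + (θ0 - θ0') ^ 2 / (8 * s02) ≤ 0 := by
    linarith [scoraLoss_midpoint_add_le x f g sb2 s02 C hf hg Rt β β' θ0 θ0',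
      hmin ((1 / 2 : ℝ) • (β + β')) ((θ0 + θ0') / 2), hmin' β θ0]
  have hβ : 0 ≤ ‖β - β'‖ ^ 2 / (8 * sb2) := by positivity
  have hθ : 0 ≤ (θ0 - θ0') ^ 2 / (8 * s02) := by positivity
  constructor
  · have : ‖β - β'‖ ^ 2 / (8 * sb2) = 0 := by linarith
    simpa [sub_eq_zero, hsb.ne'] using this
  · have : (θ0 - θ0') ^ 2 / (8 * s02) = 0 := by linarith
    simpa [sub_eq_zero, hs0.ne'] using this

lemma scoraLoss_cons_rating (R0 : Multiset (Fin A × ℝ)) (a : Fin A) (t t' : ℝ)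
    (γ : EuclideanSpace ℝ (Fin Dd)) (s : ℝ) :
    scoraLoss x f g sb2 s02 C ((a, t) ::ₘ R0) γ s
      = scoraLoss x f g sb2 s02 C ((a, t') ::ₘ R0) γ s - (t - t') * (⟪x a, γ⟫ - s) := by
  simp only [scoraLoss, Multiset.map_cons, Multiset.sum_cons]
  ring

end Scora

/-- pairwise monotonicity of the SCoRa MAP estimator for ratings.
If two SCoRa datasets share the comparisons `C` and the ratings `R0`, except that one
rating of entity `a` has value `t` in the first and `t'` in the second with `t ≥ t'`,
then `θ_a*(D) − θ_0*(D) ≥ θ_a*(D') − θ_0*(D')` (where `θ_a* = x_aᵀ β*`). -/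
theorem scora_pairwise_monotone_ratings
    {Dd A : ℕ} (x : Fin A → EuclideanSpace ℝ (Fin Dd))
    (f g : Measure ℝ) [IsProbabilityMeasure f] [IsProbabilityMeasure g]
    (hf : HasExpMoments f) (hg : HasExpMoments g)
    (sb2 s02 : ℝ) (hsb : 0 < sb2) (hs0 : 0 < s02)
    (C : Multiset (Fin A × Fin A × ℝ)) (R0 : Multiset (Fin A × ℝ))
    (a : Fin A) (t t' : ℝ) (htt : t ≥ t')
    (β β' : EuclideanSpace ℝ (Fin Dd)) (θ0 θ0' : ℝ)
    (hmin : ∀ (γ : EuclideanSpace ℝ (Fin Dd)) (s : ℝ),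
      scoraLoss x f g sb2 s02 C ((a, t) ::ₘ R0) β θ0
        ≤ scoraLoss x f g sb2 s02 C ((a, t) ::ₘ R0) γ s)
    (hmin' : ∀ (γ : EuclideanSpace ℝ (Fin Dd)) (s : ℝ),
      scoraLoss x f g sb2 s02 C ((a, t') ::ₘ R0) β' θ0'
        ≤ scoraLoss x f g sb2 s02 C ((a, t') ::ₘ R0) γ s) :
    ⟪x a, β⟫ - θ0 ≥ ⟪x a, β'⟫ - θ0' := by
  rcases htt.lt_or_eq with hlt | rfl
  · have hexchange : (t - t') * (⟪x a, β'⟫ - θ0') ≤ (t - t') * (⟪x a, β⟫ - θ0) := by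
      linarith [hmin β' θ0', hmin' β θ0, scoraLoss_cons_rating x f g sb2 s02 C R0 a t t' β θ0,
        scoraLoss_cons_rating x f g sb2 s02 C R0 a t t' β' θ0']
    exact le_of_mul_le_mul_left hexchange (sub_pos.2 hlt)
  · obtain ⟨rfl, rfl⟩ :=
      scoraLoss_minimizer_unique x f g sb2 s02 C hf hg hsb hs0 _ hmin hmin'
    exact le_rfl

end
end

section
/- Directional effect of a new rating in SCoRa: let D be a SCoRa dataset and let D' be obtained from D by adding one rating (a, t). Then Sign((θ_a*(D') − θ_0*(D')) − (θ_a*(D) − θ_0*(D))) = Sign(t − Φ_g'(θ_a*(D) − θ_0*(D))), where Sign is the sign function with Sign(0) = 0. -/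
open MeasureTheory RealInnerProductSpace

noncomputable section

/-!
Write `ψ(v) = Φ_g(v) - t v`, so that the new loss is `L' = L + ψ(x_aᵀ β - θ₀)`. The loss `L` is
strictly convex in `(β, θ₀)`: the Gaussian priors are strictly convex and every data term is a
convex cumulant generating function composed with a linear map. If the minimizer moves, strict
convexity gives `L(β*, θ₀*) < L(β'*, θ₀'*)`, and together with `L'(β'*, θ₀'*) ≤ L'(β*, θ₀*)` this
yields `ψ(u') < ψ(u)` for the old and new values `u, u'` of `x_aᵀ β - θ₀`; the tangent line of the
convex `ψ` at `u` then forces `ψ'(u) (u' - u) < 0`. If the minimizer does not move, the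
first-order conditions in `θ₀` for `L` and `L'` give `ψ'(u) = 0`.
-/

open ProbabilityTheory Set

theorem cgfm_eq_cgf (μ : Measure ℝ) : cgfm μ = cgf id μ := rfl

namespace HasExpMoments

variable {μ : Measure ℝ}

theorem mem_interior_integrableExpSet (hμ : HasExpMoments μ) (v : ℝ) :
    v ∈ interior (integrableExpSet id μ) := by
  rw [show integrableExpSet id μ = univ from eq_univ_of_forall hμ, interior_univ]
  exact mem_univ v

theorem analyticAt_cgfm (hμ : HasExpMoments μ) (v : ℝ) : AnalyticAt ℝ (cgfm μ) v :=
  analyticAt_cgf (hμ.mem_interior_integrableExpSet v)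

theorem differentiable_cgfm (hμ : HasExpMoments μ) : Differentiable ℝ (cgfm μ) :=
  fun v => (hμ.analyticAt_cgfm v).differentiableAt

/-- The second derivative of a cumulant generating function is a variance. -/
theorem convexOn_cgfm (hμ : HasExpMoments μ) : ConvexOn ℝ univ (cgfm μ) := by
  refine convexOn_univ_of_deriv2_nonneg hμ.differentiable_cgfm
    (fun v => (hμ.analyticAt_cgfm v).deriv.differentiableAt) fun v => ?_
  rw [← iteratedDeriv_eq_iterate, cgfm_eq_cgf,
    iteratedDeriv_two_cgf_eq_integral (hμ.mem_interior_integrableExpSet v)]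
  exact div_nonneg (integral_nonneg fun r => by positivity) mgf_nonneg

theorem convexOn_cgfm_comp_sub_mul {V : Type*} [AddCommGroup V] [Module ℝ V]
    (hμ : HasExpMoments μ) (ℓ : V →ₗ[ℝ] ℝ) (r : ℝ) :
    ConvexOn ℝ univ fun p => cgfm μ (ℓ p) - r * ℓ p := by
  have h := (hμ.convexOn_cgfm.sub ((LinearMap.mul ℝ ℝ r).concaveOn convex_univ)).comp_linearMap ℓ
  rw [preimage_univ] at h
  exact h

end HasExpMoments

theorem ConvexOn.multiset_sum_map {V ι : Type*} [AddCommGroup V] [Module ℝ V] {s : Set V}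
    (hs : Convex ℝ s) {m : Multiset ι} {F : ι → V → ℝ} (h : ∀ i ∈ m, ConvexOn ℝ s (F i)) :
    ConvexOn ℝ s fun p => (m.map fun i => F i p).sum := by
  induction m using Multiset.induction_on with
  | empty => simpa using convexOn_const 0 hs
  | cons i m ih =>
    simp only [Multiset.map_cons, Multiset.sum_cons]
    exact (h i (Multiset.mem_cons_self i m)).add (ih fun j hj => h j (Multiset.mem_cons_of_mem hj))

theorem strictConvexOn_sq_norm_div {E : Type*} [NormedAddCommGroup E] [InnerProductSpace ℝ E]
    {c : ℝ} (hc : 0 < c) : StrictConvexOn ℝ univ fun v : E => ‖v‖ ^ 2 / (2 * c) := by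
  refine (strongConvexOn_iff_convex.2 ?_).strictConvexOn (inv_pos.2 hc)
  exact (convexOn_const 0 convex_univ).congr fun v _ => by ring

theorem StrictConvexOn.add_prod {E F : Type*} [AddCommGroup E] [Module ℝ E] [AddCommGroup F]
    [Module ℝ F] {φ : E → ℝ} {ψ : F → ℝ} (hφ : StrictConvexOn ℝ univ φ)
    (hψ : StrictConvexOn ℝ univ ψ) : StrictConvexOn ℝ univ fun p : E × F => φ p.1 + ψ p.2 := by
  refine ⟨convex_univ, fun p _ q _ hpq a b ha hb hab => ?_⟩
  simp only [Prod.fst_add, Prod.snd_add, Prod.smul_fst, Prod.smul_snd, smul_eq_mul]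
  obtain h | h : p.1 ≠ q.1 ∨ p.2 ≠ q.2 := by
    contrapose! hpq
    exact Prod.ext hpq.1 hpq.2
  · have h1 := hφ.2 trivial trivial h ha hb hab
    have h2 := hψ.convexOn.2 (mem_univ p.2) (mem_univ q.2) ha.le hb.le hab
    simp only [smul_eq_mul] at h1 h2
    linarith
  · have h1 := hφ.convexOn.2 (mem_univ p.1) (mem_univ q.1) ha.le hb.le hab
    have h2 := hψ.2 trivial trivial h ha hb hab
    simp only [smul_eq_mul] at h1 h2
    linarith

theorem StrictConvexOn.lt_of_isMinOn {V : Type*} [AddCommMonoid V] [SMul ℝ V] {s : Set V}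
    {φ : V → ℝ} {p q : V} (hφ : StrictConvexOn ℝ s φ) (hmin : IsMinOn φ s p) (hp : p ∈ s)
    (hq : q ∈ s) (hpq : p ≠ q) : φ p < φ q :=
  (hmin hq).lt_of_ne fun h => hpq (hφ.eq_of_isMinOn hmin (fun _ hz => h ▸ hmin hz) hp hq)

theorem ConvexOn.add_mul_sub_le_of_hasDerivAt {S : Set ℝ} {φ : ℝ → ℝ} (hφ : ConvexOn ℝ S φ)
    {d u y : ℝ} (hu : u ∈ S) (hy : y ∈ S) (hd : HasDerivAt φ d u) : φ u + d * (y - u) ≤ φ y := by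
  rcases lt_trichotomy u y with h | rfl | h
  · have h1 := hφ.le_slope_of_hasDerivAt hu hy h hd
    rw [slope_def_field, le_div_iff₀ (sub_pos.2 h)] at h1
    linarith
  · simp
  · have h1 := hφ.slope_le_of_hasDerivAt hy hu h hd
    rw [slope_def_field, div_le_iff₀ (sub_pos.2 h)] at h1
    linarith

theorem IsLocalMin.hasDerivAt_eq_zero_of_add {F G : ℝ → ℝ} {a b s : ℝ} (hF : IsLocalMin F s)
    (hFG : IsLocalMin (fun y => F y + G y) s) (hF' : HasDerivAt F a s) (hG' : HasDerivAt G b s) :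
    b = 0 := by
  have ha := hF.hasDerivAt_eq_zero hF'
  have hab := hFG.hasDerivAt_eq_zero (hF'.add hG')
  linarith

theorem Differentiable.multiset_sum_map {ι 𝕜 E F : Type*} [NontriviallyNormedField 𝕜]
    [NormedAddCommGroup E] [NormedSpace 𝕜 E] [NormedAddCommGroup F] [NormedSpace 𝕜 F]
    {m : Multiset ι} {G : ι → E → F} (h : ∀ i ∈ m, Differentiable 𝕜 (G i)) :
    Differentiable 𝕜 fun y => (m.map fun i => G i y).sum := by
  induction m using Multiset.induction_on with
  | empty => simp
  | cons i m ih =>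
    simp only [Multiset.map_cons, Multiset.sum_cons]
    exact (h i (Multiset.mem_cons_self i m)).add (ih fun j hj => h j (Multiset.mem_cons_of_mem hj))

theorem Real.sign_eq_sign_of_mul_pos {a b : ℝ} (h : 0 < a * b) : Real.sign a = Real.sign b := by
  rcases mul_pos_iff.1 h with ⟨ha, hb⟩ | ⟨ha, hb⟩
  · rw [Real.sign_of_pos ha, Real.sign_of_pos hb]
  · rw [Real.sign_of_neg ha, Real.sign_of_neg hb]

section ScoraLoss

variable {Dd A : ℕ} (x : Fin A → EuclideanSpace ℝ (Fin Dd)) {f g : Measure ℝ} {sb2 s02 : ℝ}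
  (C : Multiset (Fin A × Fin A × ℝ)) (Rt : Multiset (Fin A × ℝ))

theorem scoraLoss_cons (a : Fin A) (t : ℝ) (β : EuclideanSpace ℝ (Fin Dd)) (θ0 : ℝ) :
    scoraLoss x f g sb2 s02 C ((a, t) ::ₘ Rt) β θ0
      = scoraLoss x f g sb2 s02 C Rt β θ0 + (cgfm g (⟪x a, β⟫ - θ0) - t * (⟪x a, β⟫ - θ0)) := by
  simp only [scoraLoss, Multiset.map_cons, Multiset.sum_cons]
  ring

theorem differentiable_scoraLoss_intercept (hg : HasExpMoments g) (β : EuclideanSpace ℝ (Fin Dd)) :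
    Differentiable ℝ fun θ0 => scoraLoss x f g sb2 s02 C Rt β θ0 := by
  have hΦ := hg.differentiable_cgfm
  have hRt : Differentiable ℝ fun θ0 : ℝ =>
      (Rt.map fun q => cgfm g (⟪x q.1, β⟫ - θ0) - q.2 * (⟪x q.1, β⟫ - θ0)).sum :=
    Differentiable.multiset_sum_map fun q _ => by fun_prop
  unfold scoraLoss
  fun_prop

theorem strictConvexOn_scoraLoss (hf : HasExpMoments f) (hg : HasExpMoments g) (hsb : 0 < sb2)
    (hs0 : 0 < s02) : StrictConvexOn ℝ univ
      fun p : EuclideanSpace ℝ (Fin Dd) × ℝ => scoraLoss x f g sb2 s02 C Rt p.1 p.2 := by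
  have hprior := (strictConvexOn_sq_norm_div (E := EuclideanSpace ℝ (Fin Dd)) hsb).add_prod
    (strictConvexOn_sq_norm_div (E := ℝ) hs0)
  have hC : ConvexOn ℝ univ fun p : EuclideanSpace ℝ (Fin Dd) × ℝ =>
      (C.map fun q => cgfm f ⟪x q.1 - x q.2.1, p.1⟫ - q.2.2 * ⟪x q.1 - x q.2.1, p.1⟫).sum :=
    ConvexOn.multiset_sum_map convex_univ fun q _ => hf.convexOn_cgfm_comp_sub_mul
      ((innerₗ _ (x q.1 - x q.2.1)).comp (LinearMap.fst ℝ _ ℝ)) q.2.2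
  have hRt : ConvexOn ℝ univ fun p : EuclideanSpace ℝ (Fin Dd) × ℝ =>
      (Rt.map fun q => cgfm g (⟪x q.1, p.1⟫ - p.2) - q.2 * (⟪x q.1, p.1⟫ - p.2)).sum :=
    ConvexOn.multiset_sum_map convex_univ fun q _ => hg.convexOn_cgfm_comp_sub_mul
      ((innerₗ _ (x q.1)).comp (LinearMap.fst ℝ _ ℝ) - LinearMap.snd ℝ _ ℝ) q.2
  refine ((hprior.add_convexOn hC).add_convexOn hRt).congr fun p _ => ?_
  simp only [scoraLoss, Pi.add_apply, Real.norm_eq_abs, sq_abs]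

end ScoraLoss

theorem scora_directional_update_rating_general
    {Dd A : ℕ} (x : Fin A → EuclideanSpace ℝ (Fin Dd))
    (f g : Measure ℝ)
    (hf : HasExpMoments f) (hg : HasExpMoments g)
    (sb2 s02 : ℝ) (hsb : 0 < sb2) (hs0 : 0 < s02)
    (C : Multiset (Fin A × Fin A × ℝ)) (Rt : Multiset (Fin A × ℝ))
    (a : Fin A) (t : ℝ)
    (β β' : EuclideanSpace ℝ (Fin Dd)) (θ0 θ0' : ℝ)
    (hmin : ∀ (γ : EuclideanSpace ℝ (Fin Dd)) (s : ℝ),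
      scoraLoss x f g sb2 s02 C Rt β θ0 ≤ scoraLoss x f g sb2 s02 C Rt γ s)
    (hmin' : ∀ (γ : EuclideanSpace ℝ (Fin Dd)) (s : ℝ),
      scoraLoss x f g sb2 s02 C ((a, t) ::ₘ Rt) β' θ0'
        ≤ scoraLoss x f g sb2 s02 C ((a, t) ::ₘ Rt) γ s) :
    Real.sign ((⟪x a, β'⟫ - θ0') - (⟪x a, β⟫ - θ0))
      = Real.sign (t - deriv (cgfm g) (⟪x a, β⟫ - θ0)) := by
  have hΦ' := fun v => (hg.differentiable_cgfm v).hasDerivAt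
  by_cases hsame : (β', θ0') = (β, θ0)
  · obtain ⟨rfl, rfl⟩ := Prod.mk.inj hsame
    have hrating : HasDerivAt (fun s => cgfm g (⟪x a, β'⟫ - s) - t * (⟪x a, β'⟫ - s))
        (t - deriv (cgfm g) (⟪x a, β'⟫ - θ0')) θ0' := by
      have hin := (hasDerivAt_id' θ0').const_sub ⟪x a, β'⟫
      exact (((hΦ' _).comp θ0' hin).sub (hin.const_mul t)).congr_deriv (by ring)
    have hfirstOrder := IsLocalMin.hasDerivAt_eq_zero_of_add
      (Filter.Eventually.of_forall (hmin β')) (Filter.Eventually.of_forall fun s => by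
        simpa only [scoraLoss_cons] using hmin' β' s)
      ((differentiable_scoraLoss_intercept x C Rt hg β' θ0').hasDerivAt) hrating
    rw [hfirstOrder, sub_self]
  · have hminOn : IsMinOn (fun p : EuclideanSpace ℝ (Fin Dd) × ℝ =>
        scoraLoss x f g sb2 s02 C Rt p.1 p.2) univ (β, θ0) :=
      isMinOn_univ_iff.2 fun p => hmin p.1 p.2
    have hconv := strictConvexOn_scoraLoss x C Rt hf hg hsb hs0
    have hlt := hconv.lt_of_isMinOn hminOn (mem_univ _) (mem_univ (β', θ0')) (Ne.symm hsame)
    have hdecrease := hmin' β θ0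
    rw [scoraLoss_cons, scoraLoss_cons] at hdecrease
    have htangent := hg.convexOn_cgfm.add_mul_sub_le_of_hasDerivAt (mem_univ _) (mem_univ _)
      (hΦ' (⟪x a, β⟫ - θ0)) (y := ⟪x a, β'⟫ - θ0')
    exact Real.sign_eq_sign_of_mul_pos (by linarith)

/-- directional effect of a new rating in SCoRa. If `D'` is obtained from `D`
by adding one rating `(a, t)`, then
`Sign((θ_a*(D') − θ_0*(D')) − (θ_a*(D) − θ_0*(D))) = Sign(t − Φ_g'(θ_a*(D) − θ_0*(D)))`
(where `θ_a* = x_aᵀ β*`). -/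
theorem scora_directional_update_rating
    {Dd A : ℕ} (x : Fin A → EuclideanSpace ℝ (Fin Dd))
    (f g : Measure ℝ) [IsProbabilityMeasure f] [IsProbabilityMeasure g]
    (hf : HasExpMoments f) (hg : HasExpMoments g)
    (sb2 s02 : ℝ) (hsb : 0 < sb2) (hs0 : 0 < s02)
    (C : Multiset (Fin A × Fin A × ℝ)) (Rt : Multiset (Fin A × ℝ))
    (a : Fin A) (t : ℝ)
    (β β' : EuclideanSpace ℝ (Fin Dd)) (θ0 θ0' : ℝ)
    (hmin : ∀ (γ : EuclideanSpace ℝ (Fin Dd)) (s : ℝ),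
      scoraLoss x f g sb2 s02 C Rt β θ0 ≤ scoraLoss x f g sb2 s02 C Rt γ s)
    (hmin' : ∀ (γ : EuclideanSpace ℝ (Fin Dd)) (s : ℝ),
      scoraLoss x f g sb2 s02 C ((a, t) ::ₘ Rt) β' θ0'
        ≤ scoraLoss x f g sb2 s02 C ((a, t) ::ₘ Rt) γ s) :
    Real.sign ((⟪x a, β'⟫ - θ0') - (⟪x a, β⟫ - θ0))
      = Real.sign (t - deriv (cgfm g) (⟪x a, β⟫ - θ0)) :=
  scora_directional_update_rating_general x f g hf hg sb2 s02 hsb hs0 C Rt a t β β' θ0 θ0' hmin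
    hmin'

end
end
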